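/- Let R be a unital associative algebra over a field k and n ≥ 1 an integer. There is an isomorphism of unital k-algebras between the matrix algebra M_n(E(R)) of (n×n)-matrices with entries in E(R) and E(R) itself; consequently, the Lie algebras gl_n(E(R)) and gl_top(∞,R) (the Lie algebra of E(R) under the commutator bracket) are isomorphic as Lie algebras over k. -/

import Mathlib

/-- The lattice `tⁿR[[t]]` inside the formal Laurent series module `R((t))`:
series whose coefficients vanish in degrees `< n`. -/
def lat (R : Type*) [Ring R] (n : ℤ) : Set (LaurentSeries R) :=
  {f | ∀ i : ℤ, i < n → f.coeff i = 0}

/-- An endomorphism of `R((t))` as a right `R`-module: an additive map commuting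
with right multiplication by scalars `r ∈ R`. -/
def IsREndo {R : Type*} [Ring R] (φ : LaurentSeries R → LaurentSeries R) : Prop :=
  (∀ f g : LaurentSeries R, φ (f + g) = φ f + φ g) ∧
  (∀ (f : LaurentSeries R) (r : R), φ (f * HahnSeries.C r) = φ f * HahnSeries.C r)

/-- Membership in `E(R)`: a right `R`-module endomorphism `φ` of `R((t))` such that
(1) for every `n` there is `n′` with `φ(tⁿR[[t]]) ⊆ t^{n′}R[[t]]`, and
(2) for every `m` there is `m′` with `φ(t^{m′}R[[t]]) ⊆ tᵐR[[t]]`. -/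
def InE {R : Type*} [Ring R] (φ : LaurentSeries R → LaurentSeries R) : Prop :=
  IsREndo φ ∧
  (∀ n : ℤ, ∃ n' : ℤ, ∀ f ∈ lat R n, φ f ∈ lat R n') ∧
  (∀ m : ℤ, ∃ m' : ℤ, ∀ f ∈ lat R m', φ f ∈ lat R m)


/-- Multiplication of `n × n` matrices whose entries are endomorphisms of `R((t))`:
`(A·B)_{i,j} = Σ_l A_{i,l} ∘ B_{l,j}`. -/
def matMulE {R : Type*} [Ring R] {n : ℕ}
    (A B : Matrix (Fin n) (Fin n) (LaurentSeries R → LaurentSeries R)) :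
    Matrix (Fin n) (Fin n) (LaurentSeries R → LaurentSeries R) :=
  fun i j => fun f => ∑ l : Fin n, A i l (B l j f)

/-- The identity `n × n` matrix of endomorphisms of `R((t))`. -/
def matOneE {R : Type*} [Ring R] {n : ℕ} :
    Matrix (Fin n) (Fin n) (LaurentSeries R → LaurentSeries R) :=
  fun i j => if i = j then id else fun _ => 0

/-!
Splitting the exponents of `t` by their residue modulo `n` identifies `R((t))` with
`R((t))ⁿ` as right `R`-modules: `f ↦ (∑ᵢ f_{ni+j} tⁱ)_{j<n}`. The coordinate maps of this
identification and of its inverse only rescale the exponents by `n`, so they lie in `E(R)`.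
Conjugating the action of a matrix of endomorphisms on `R((t))ⁿ` back to `R((t))` therefore
maps `M_n(E(R))` into `E(R)`. It is bijective because a matrix of additive maps is determined
by its action on `R((t))ⁿ`, and every additive map of `R((t))ⁿ` is the action of the matrix of
its components; for the conjugate of `φ ∈ E(R)` these components are composites of `φ` with
coordinate maps, hence lie in `E(R)` again.
-/

open Finset

section Lattices

variable {R : Type*} [Ring R]

theorem lat_antitone : Antitone (lat R) :=
  fun _ _ h _ hf i hi => hf i (hi.trans_le h)

theorem exists_mem_lat (f : LaurentSeries R) : ∃ b, f ∈ lat R b :=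
  ⟨f.order, fun _ hi => HahnSeries.coeff_eq_zero_of_lt_order hi⟩

end Lattices

section Strands

variable {R : Type*} [Ring R] {n : ℕ}

theorem Fin.mul_add_lt_mul (j : Fin n) {i m : ℤ} (h : i < m) : n * i + j < n * m := by
  have hj : (j : ℤ) < n := by exact_mod_cast j.isLt
  nlinarith

theorem Fin.mul_add_emod (j : Fin n) (i : ℤ) : (n * i + j) % n = j := by
  have hj : (j : ℤ) < n := by exact_mod_cast j.isLt
  rw [add_comm, Int.add_mul_emod_self_left, Int.emod_eq_of_lt (by positivity) hj]

theorem Fin.mul_add_ediv (j : Fin n) (i : ℤ) : (n * i + j) / n = i := by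
  have hj : (j : ℤ) < n := by exact_mod_cast j.isLt
  have hn : (n : ℤ) ≠ 0 := by exact_mod_cast j.pos.ne'
  rw [add_comm, Int.add_mul_ediv_left _ _ hn, Int.ediv_eq_zero_of_lt (by positivity) hj, zero_add]

def strand (j : Fin n) : LaurentSeries R →+ LaurentSeries R where
  toFun f := HahnSeries.ofSuppBddBelow (fun i => f.coeff (n * i + j)) <| by
    obtain ⟨b, hb⟩ := exists_mem_lat f
    have hn : (n : ℤ) ≠ 0 := by exact_mod_cast j.pos.ne'
    have hb' := lat_antitone (Int.mul_ediv_self_le (x := b) hn) hb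
    exact ⟨b / n, fun i hi => not_lt.1 fun h => hi (hb' _ (j.mul_add_lt_mul h))⟩
  map_zero' := rfl
  map_add' _ _ := rfl

def unstrand (j : Fin n) : LaurentSeries R →+ LaurentSeries R where
  toFun g := HahnSeries.ofSuppBddBelow
      (fun m => if m % n = j then g.coeff (m / n) else 0) <| by
    obtain ⟨b, hb⟩ := exists_mem_lat g
    refine ⟨n * b, fun m hm => not_lt.1 fun h => hm ?_⟩
    dsimp only
    rw [hb _ (Int.ediv_lt_of_lt_mul (by exact_mod_cast j.pos) (by linarith)), ite_self]
  map_zero' := by ext; simp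
  map_add' _ _ := by
    ext
    simp only [HahnSeries.coeff_add, HahnSeries.coeff_ofSuppBddBelow]
    split_ifs <;> simp

@[simp]
theorem strand_coeff (j : Fin n) (f : LaurentSeries R) (i : ℤ) :
    (strand j f).coeff i = f.coeff (n * i + j) := rfl

@[simp]
theorem unstrand_coeff (j : Fin n) (g : LaurentSeries R) (m : ℤ) :
    (unstrand j g).coeff m = if m % n = j then g.coeff (m / n) else 0 := rfl

theorem strand_unstrand (j l : Fin n) (g : LaurentSeries R) :
    strand j (unstrand l g) = (Pi.single l g : Fin n → LaurentSeries R) j := by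
  ext i
  rw [strand_coeff, unstrand_coeff, j.mul_add_emod, j.mul_add_ediv, Pi.single_apply]
  by_cases h : j = l
  · simp [h]
  · simp [h, Fin.val_injective.ne h]

theorem sum_unstrand_strand [NeZero n] (f : LaurentSeries R) :
    ∑ j : Fin n, unstrand j (strand j f) = f := by
  ext m
  have hn : (0 : ℤ) < n := by exact_mod_cast (NeZero.pos n)
  have hlt := Int.emod_lt_of_pos m hn
  have hnn := Int.emod_nonneg m hn.ne'
  set r : Fin n := ⟨(m % n).toNat, by omega⟩
  have hr : ((r : ℕ) : ℤ) = m % n := Int.toNat_of_nonneg hnn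
  rw [HahnSeries.coeff_sum, Finset.sum_eq_single r]
  · rw [unstrand_coeff, if_pos hr.symm, strand_coeff, hr, Int.mul_ediv_add_emod]
  · intro l _ hl
    rw [unstrand_coeff, if_neg]
    exact fun h => hl (Fin.ext (by omega))
  · simp

theorem strand_mul_C (j : Fin n) (f : LaurentSeries R) (r : R) :
    strand j (f * HahnSeries.C r) = strand j f * HahnSeries.C r := by
  ext i
  simp [HahnSeries.C_apply, HahnSeries.coeff_mul_single_zero]

theorem unstrand_mul_C (j : Fin n) (g : LaurentSeries R) (r : R) :
    unstrand j (g * HahnSeries.C r) = unstrand j g * HahnSeries.C r := by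
  ext m
  simp only [HahnSeries.C_apply, HahnSeries.coeff_mul_single_zero, unstrand_coeff]
  split_ifs <;> simp

theorem unstrand_smul {S : Type*} [SMulZeroClass S R] (j : Fin n) (c : S)
    (g : LaurentSeries R) : unstrand j (c • g) = c • unstrand j g := by
  ext m
  simp only [HahnSeries.coeff_smul, unstrand_coeff]
  split_ifs <;> simp

theorem strand_mem_lat (j : Fin n) {f : LaurentSeries R} {m : ℤ} (hf : f ∈ lat R (n * m)) :
    strand j f ∈ lat R m :=
  fun _ hi => hf _ (j.mul_add_lt_mul hi)

theorem unstrand_mem_lat (j : Fin n) {g : LaurentSeries R} {m : ℤ} (hg : g ∈ lat R m) :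
    unstrand j g ∈ lat R (n * m) := by
  intro i hi
  rw [unstrand_coeff, hg _ (Int.ediv_lt_of_lt_mul (by exact_mod_cast j.pos) (by linarith)),
    ite_self]

end Strands

section AlgebraE

variable {R : Type*} [Ring R] {φ ψ : LaurentSeries R → LaurentSeries R}

theorem InE.map_add (hφ : InE φ) (f g : LaurentSeries R) : φ (f + g) = φ f + φ g :=
  hφ.1.1 f g

theorem inE_zero : InE (fun _ => (0 : LaurentSeries R)) :=
  ⟨⟨fun _ _ => (add_zero 0).symm, fun _ _ => (zero_mul _).symm⟩,
    fun _ => ⟨0, fun _ _ _ _ => rfl⟩, fun _ => ⟨0, fun _ _ _ _ => rfl⟩⟩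

theorem InE.add (hφ : InE φ) (hψ : InE ψ) : InE (fun f => φ f + ψ f) := by
  obtain ⟨⟨hφ_add, hφ_C⟩, hφ₁, hφ₂⟩ := hφ
  obtain ⟨⟨hψ_add, hψ_C⟩, hψ₁, hψ₂⟩ := hψ
  refine ⟨⟨fun f g => by simp only [hφ_add, hψ_add]; abel,
    fun f r => by simp only [hφ_C, hψ_C, add_mul]⟩,
    fun m => ?_, fun m => ?_⟩
  · obtain ⟨p, hp⟩ := hφ₁ m
    obtain ⟨q, hq⟩ := hψ₁ m
    refine ⟨min p q, fun f hf i hi => ?_⟩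
    rw [HahnSeries.coeff_add, lat_antitone (min_le_left p q) (hp f hf) i hi,
      lat_antitone (min_le_right p q) (hq f hf) i hi, add_zero]
  · obtain ⟨p, hp⟩ := hφ₂ m
    obtain ⟨q, hq⟩ := hψ₂ m
    refine ⟨max p q, fun f hf i hi => ?_⟩
    rw [HahnSeries.coeff_add, hp f (lat_antitone (le_max_left p q) hf) i hi,
      hq f (lat_antitone (le_max_right p q) hf) i hi, add_zero]

theorem InE.comp (hφ : InE φ) (hψ : InE ψ) : InE (fun f => φ (ψ f)) := by
  obtain ⟨⟨hφ_add, hφ_C⟩, hφ₁, hφ₂⟩ := hφ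
  obtain ⟨⟨hψ_add, hψ_C⟩, hψ₁, hψ₂⟩ := hψ
  refine ⟨⟨fun f g => by simp only [hψ_add, hφ_add], fun f r => by simp only [hψ_C, hφ_C]⟩,
    fun m => ?_, fun m => ?_⟩
  · obtain ⟨p, hp⟩ := hψ₁ m
    obtain ⟨q, hq⟩ := hφ₁ p
    exact ⟨q, fun f hf => hq _ (hp f hf)⟩
  · obtain ⟨p, hp⟩ := hφ₂ m
    obtain ⟨q, hq⟩ := hψ₂ p
    exact ⟨q, fun f hf => hp _ (hq f hf)⟩

theorem inE_finset_sum {ι : Type*} (s : Finset ι) {F : ι → LaurentSeries R → LaurentSeries R}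
    (hF : ∀ i ∈ s, InE (F i)) : InE (fun f => ∑ i ∈ s, F i f) := by
  classical
  induction s using Finset.induction_on with
  | empty => simpa using inE_zero
  | insert a s ha ih =>
    simp_rw [Finset.sum_insert ha]
    exact (hF a (mem_insert_self a s)).add (ih fun i hi => hF i (mem_insert_of_mem hi))

variable {n : ℕ}

theorem inE_strand (j : Fin n) : InE (strand (R := R) j) := by
  have hn : (n : ℤ) ≠ 0 := by exact_mod_cast j.pos.ne'
  refine ⟨⟨map_add _, strand_mul_C j⟩, fun m => ⟨m / n, fun f hf => ?_⟩,
    fun m => ⟨n * m, fun f => strand_mem_lat j⟩⟩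
  exact strand_mem_lat j (lat_antitone (Int.mul_ediv_self_le hn) hf)

theorem inE_unstrand (j : Fin n) : InE (unstrand (R := R) j) := by
  have hn : (1 : ℤ) ≤ n := by exact_mod_cast j.pos
  refine ⟨⟨map_add _, unstrand_mul_C j⟩, fun m => ⟨n * m, fun g => unstrand_mem_lat j⟩,
    fun m => ⟨|m|, fun g hg => ?_⟩⟩
  refine lat_antitone ?_ (unstrand_mem_lat j hg)
  nlinarith [le_abs_self m, abs_nonneg m]

end AlgebraE

section MatrixAction

variable {ι M : Type*} [Fintype ι] [AddCommGroup M]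

def matrixAct (A : Matrix ι ι (M → M)) (v : ι → M) : ι → M :=
  fun i => ∑ j, A i j (v j)

theorem matrixAct_add (A B : Matrix ι ι (M → M)) :
    matrixAct (A + B) = matrixAct A + matrixAct B := by
  funext v i
  simp [matrixAct, sum_add_distrib]

theorem matrixAct_sub (A B : Matrix ι ι (M → M)) :
    matrixAct (A - B) = matrixAct A - matrixAct B := by
  funext v i
  simp [matrixAct, sum_sub_distrib]

theorem matrixAct_smul {S : Type*} [DistribSMul S M] (c : S) (A : Matrix ι ι (M → M)) :
    matrixAct (c • A) = c • matrixAct A := by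
  funext v i
  simp [matrixAct, smul_sum]

variable [DecidableEq ι]

theorem matrixAct_single {A : Matrix ι ι (M → M)}
    (hA : ∀ i j x y, A i j (x + y) = A i j x + A i j y) (i j : ι) (x : M) :
    matrixAct A (Pi.single j x) i = A i j x := by
  rw [matrixAct, sum_eq_single j (fun l _ hl => ?_) (by simp), Pi.single_eq_same]
  rw [Pi.single_eq_of_ne hl]
  exact map_zero (AddMonoidHom.mk' _ (hA i l))

theorem matrixAct_injective {A B : Matrix ι ι (M → M)}
    (hA : ∀ i j x y, A i j (x + y) = A i j x + A i j y)
    (hB : ∀ i j x y, B i j (x + y) = B i j x + B i j y)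
    (h : matrixAct A = matrixAct B) : A = B := by
  funext i j x
  rw [← matrixAct_single hA, ← matrixAct_single hB, h]

theorem matrixAct_of_addMonoidHom (ψ : (ι → M) →+ (ι → M)) :
    matrixAct (Matrix.of fun i j x => ψ (Pi.single j x) i) = ψ := by
  funext v i
  simp only [matrixAct, Matrix.of_apply, ← Finset.sum_apply, ← map_sum, univ_sum_single]

end MatrixAction

section BlockEndo

variable {R : Type*} [Ring R] {n : ℕ}

theorem matrixAct_matMulE {A : Matrix (Fin n) (Fin n) (LaurentSeries R → LaurentSeries R)}
    (hA : ∀ i j f g, A i j (f + g) = A i j f + A i j g)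
    (B : Matrix (Fin n) (Fin n) (LaurentSeries R → LaurentSeries R)) :
    matrixAct (matMulE A B) = matrixAct A ∘ matrixAct B := by
  funext v i
  have hA_sum (l : Fin n) : A i l (∑ j, B l j (v j)) = ∑ j, A i l (B l j (v j)) :=
    map_sum (AddMonoidHom.mk' _ (hA i l)) _ _
  simp only [matrixAct, matMulE, Function.comp_apply, hA_sum]
  exact sum_comm

theorem matrixAct_matOneE :
    matrixAct (matOneE (R := R) (n := n)) = id := by
  funext v i
  simp [matrixAct, matOneE, ite_apply]

variable [NeZero n]

def strandEquiv : LaurentSeries R ≃+ (Fin n → LaurentSeries R) where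
  toFun f j := strand j f
  invFun v := ∑ j, unstrand j (v j)
  left_inv := sum_unstrand_strand
  right_inv v := by
    funext j
    simp only [map_sum, strand_unstrand, ← Finset.sum_apply, univ_sum_single]
  map_add' f g := by
    funext j
    exact map_add _ f g

theorem strandEquiv_symm_apply (v : Fin n → LaurentSeries R) :
    strandEquiv.symm v = ∑ j, unstrand j (v j) := rfl

theorem strandEquiv_symm_single (j : Fin n) (g : LaurentSeries R) :
    strandEquiv.symm (Pi.single j g) = unstrand j g := by
  rw [strandEquiv_symm_apply, sum_eq_single j (fun l _ hl => by simp [hl]) (by simp),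
    Pi.single_eq_same]

theorem strandEquiv_symm_smul {S : Type*} [Semiring S] [Module S R] (c : S)
    (v : Fin n → LaurentSeries R) : strandEquiv.symm (c • v) = c • strandEquiv.symm v := by
  simp only [strandEquiv_symm_apply, Pi.smul_apply, unstrand_smul, smul_sum]

def blockEndo (A : Matrix (Fin n) (Fin n) (LaurentSeries R → LaurentSeries R)) :
    LaurentSeries R → LaurentSeries R :=
  fun f => strandEquiv.symm (matrixAct A (strandEquiv f))

theorem blockEndo_add (A B : Matrix (Fin n) (Fin n) (LaurentSeries R → LaurentSeries R)) :
    blockEndo (A + B) = blockEndo A + blockEndo B := by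
  funext f
  simp [blockEndo, matrixAct_add]

theorem blockEndo_sub (A B : Matrix (Fin n) (Fin n) (LaurentSeries R → LaurentSeries R)) :
    blockEndo (A - B) = blockEndo A - blockEndo B := by
  funext f
  simp [blockEndo, matrixAct_sub]

theorem blockEndo_smul {S : Type*} [Semiring S] [Module S R] (c : S)
    (A : Matrix (Fin n) (Fin n) (LaurentSeries R → LaurentSeries R)) :
    blockEndo (c • A) = c • blockEndo A := by
  funext f
  simp [blockEndo, matrixAct_smul, strandEquiv_symm_smul]

theorem blockEndo_matMulE {A : Matrix (Fin n) (Fin n) (LaurentSeries R → LaurentSeries R)}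
    (hA : ∀ i j f g, A i j (f + g) = A i j f + A i j g)
    (B : Matrix (Fin n) (Fin n) (LaurentSeries R → LaurentSeries R)) :
    blockEndo (matMulE A B) = fun f => blockEndo A (blockEndo B f) := by
  funext f
  simp [blockEndo, matrixAct_matMulE hA]

theorem blockEndo_matOneE : blockEndo (matOneE (R := R) (n := n)) = id := by
  funext f
  simp [blockEndo, matrixAct_matOneE]

theorem blockEndo_injective {A B : Matrix (Fin n) (Fin n) (LaurentSeries R → LaurentSeries R)}
    (hA : ∀ i j f g, A i j (f + g) = A i j f + A i j g)
    (hB : ∀ i j f g, B i j (f + g) = B i j f + B i j g)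
    (h : blockEndo A = blockEndo B) : A = B := by
  refine matrixAct_injective hA hB (funext fun v => ?_)
  simpa [blockEndo] using congrArg (strandEquiv (n := n)) (congrFun h (strandEquiv.symm v))

theorem blockEndo_of_strands {φ : LaurentSeries R → LaurentSeries R}
    (hφ : ∀ f g, φ (f + g) = φ f + φ g) :
    blockEndo (Matrix.of fun (i j : Fin n) g => strand i (φ (unstrand j g))) = φ := by
  let ψ := (strandEquiv (R := R) (n := n)).toAddMonoidHom.comp
    ((AddMonoidHom.mk' φ hφ).comp (strandEquiv (R := R) (n := n)).symm.toAddMonoidHom)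
  have hψ : (Matrix.of fun (i j : Fin n) g => strand i (φ (unstrand j g))) =
      Matrix.of fun i j g => ψ (Pi.single j g) i := by
    refine congrArg Matrix.of (funext fun i => funext fun j => funext fun g => ?_)
    change strand i (φ (unstrand j g)) = strand i (φ (strandEquiv.symm (Pi.single j g)))
    rw [strandEquiv_symm_single]
  funext f
  rw [blockEndo, hψ, matrixAct_of_addMonoidHom]
  change strandEquiv.symm (strandEquiv (φ (strandEquiv.symm (strandEquiv f)))) = φ f
  rw [AddEquiv.symm_apply_apply, AddEquiv.symm_apply_apply]

theorem inE_blockEndo {A : Matrix (Fin n) (Fin n) (LaurentSeries R → LaurentSeries R)}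
    (hA : ∀ i j, InE (A i j)) : InE (blockEndo A) :=
  show InE fun f => ∑ i, unstrand i (∑ j, A i j (strand j f)) from
    inE_finset_sum _ fun i _ => (inE_unstrand i).comp <|
    inE_finset_sum _ fun j _ => (hA i j).comp (inE_strand j)

end BlockEndo

/-- for `n ≥ 1` there is an isomorphism of unital `k`-algebras
`M_n(E(R)) ≅ E(R)`: a map `T` on matrices of endomorphisms which sends matrices with
entries in `E(R)` into `E(R)`, is additive, `k`-linear, multiplicative and unital on
such matrices, and restricts to a bijection between `M_n(E(R))` and `E(R)`.
Consequently `T` preserves commutator brackets, so the Lie algebras `gl_n(E(R))` and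
`gl_top(∞,R)` (the Lie algebra of `E(R)`) are isomorphic as Lie algebras over `k`. -/
theorem matrix_E_iso_E
    (k R : Type*) [Field k] [Ring R] [Algebra k R] (n : ℕ) (hn : 1 ≤ n) :
    ∃ T : Matrix (Fin n) (Fin n) (LaurentSeries R → LaurentSeries R) →
          (LaurentSeries R → LaurentSeries R),
      (∀ A, (∀ i j, InE (A i j)) → InE (T A)) ∧
      (∀ A B, (∀ i j, InE (A i j)) → (∀ i j, InE (B i j)) →
        T (A + B) = T A + T B) ∧
      (∀ (c : k) (A), (∀ i j, InE (A i j)) → T (c • A) = c • T A) ∧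
      (∀ A B, (∀ i j, InE (A i j)) → (∀ i j, InE (B i j)) →
        T (matMulE A B) = fun f => T A (T B f)) ∧
      T matOneE = id ∧
      (∀ A B, (∀ i j, InE (A i j)) → (∀ i j, InE (B i j)) → T A = T B → A = B) ∧
      (∀ φ, InE φ → ∃ A, (∀ i j, InE (A i j)) ∧ T A = φ) ∧
      -- the induced isomorphism of Lie algebras gl_n(E(R)) ≅ gl_top(∞,R):
      (∀ A B, (∀ i j, InE (A i j)) → (∀ i j, InE (B i j)) →
        T (matMulE A B - matMulE B A) = fun f => T A (T B f) - T B (T A f)) := by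
  have : NeZero n := ⟨by omega⟩
  have additive {A : Matrix (Fin n) (Fin n) (LaurentSeries R → LaurentSeries R)}
      (hA : ∀ i j, InE (A i j)) : ∀ i j f g, A i j (f + g) = A i j f + A i j g :=
    fun i j => (hA i j).map_add
  refine ⟨blockEndo, fun A hA => inE_blockEndo hA, fun A B _ _ => blockEndo_add A B,
    fun c A _ => blockEndo_smul c A, fun A B hA _ => blockEndo_matMulE (additive hA) B,
    blockEndo_matOneE, fun A B hA hB => blockEndo_injective (additive hA) (additive hB),
    fun φ hφ => ⟨_, fun i j => (inE_strand i).comp (hφ.comp (inE_unstrand j)),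
      blockEndo_of_strands hφ.map_add⟩,
    fun A B hA hB => ?_⟩
  rw [blockEndo_sub, blockEndo_matMulE (additive hA), blockEndo_matMulE (additive hB)]
  rfl
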